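/- Let A ⊆ F_q with q^{1/2} ≲ |A| ≲ q^{13/21}. Then max(|A+A|, |A·A·A|) ≥ c |A|^{9/5} / q^{2/5} for an absolute constant c > 0. -/

import Mathlib

open Finset Pointwise

/-!
Take the points `(A·A) × (A+A)` and the lines `y = a⁻¹ x + b` with `a ∈ A \ {0}`, `b ∈ A`: the point
`(a c, b + c)` lies on the line `y = a⁻¹ x + b`, so there are at least `|A \ {0}| |A|²` incidences.
Vinh's bound `(I(P, L) - |P||L|/q)² ≤ q |P||L|` holds because the number of lines through a point
has mean `|L|/q` and variance at most `q |L|`, two distinct lines meeting at most once. With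
`M = max(|A+A|, |A·A·A|) ≥ |A·A|` this forces `q |A| ≲ M²` or `|A|⁴ ≲ q M²`, and in the range
`q^{1/2} ≲ |A| ≲ q^{13/21}` either alternative gives `M ≳ |A|^{9/5} / q^{2/5}`.
-/

lemma sq_sum_sub_card_mul_le {α : Type*} [Fintype α] (s : Finset α) (f : α → ℝ) (μ : ℝ) :
    (∑ x ∈ s, f x - #s * μ) ^ 2 ≤ #s * ∑ x, (f x - μ) ^ 2 := by
  calc (∑ x ∈ s, f x - #s * μ) ^ 2 = (∑ x ∈ s, (f x - μ)) ^ 2 := by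
        rw [sum_sub_distrib, sum_const, nsmul_eq_mul]
    _ ≤ #s * ∑ x ∈ s, (f x - μ) ^ 2 := sq_sum_le_card_mul_sum_sq
    _ ≤ #s * ∑ x, (f x - μ) ^ 2 :=
        mul_le_mul_of_nonneg_left (sum_le_univ_sum_of_nonneg fun x => sq_nonneg _) (by positivity)

section Incidence

variable {F : Type*} [Field F] [DecidableEq F]

-- `l = (m, k)` encodes the line `y = m x + k`.
abbrev OnLine (p l : F × F) : Prop := p.2 = l.1 * p.1 + l.2

def incidences (P L : Finset (F × F)) : ℕ := #{x ∈ P ×ˢ L | OnLine x.1 x.2}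

lemma incidences_eq_sum_card_lines_through (P L : Finset (F × F)) :
    incidences P L = ∑ p ∈ P, #(L.bipartiteAbove OnLine p) := by
  rw [incidences, card_filter, sum_product]
  simp only [bipartiteAbove, card_filter]

variable [Fintype F]

lemma card_points_onLine (l : F × F) : #(univ.bipartiteBelow OnLine l) = Fintype.card F := by
  have : univ.bipartiteBelow OnLine l =
      univ.map ⟨fun x => (x, l.1 * x + l.2), fun _ _ h => congrArg Prod.fst h⟩ := by
    ext p
    simp only [mem_bipartiteBelow, mem_univ, true_and, mem_map]
    exact ⟨fun h => ⟨p.1, Prod.ext rfl h.symm⟩, by rintro ⟨x, rfl⟩; rfl⟩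
  rw [this, card_map, card_univ]

lemma card_points_onLine_inter_le_one {l l' : F × F} (h : l ≠ l') :
    #{p : F × F | OnLine p l ∧ OnLine p l'} ≤ 1 := by
  refine card_le_one.2 fun p hp p' hp' => ?_
  simp only [mem_filter, mem_univ, true_and] at hp hp'
  by_contra hne
  have hx : p.1 ≠ p'.1 := fun hx => hne (Prod.ext hx (by rw [hp.1, hp'.1, hx]))
  have hslope : l.1 = l'.1 := by
    have : (l.1 - l'.1) * (p.1 - p'.1) = 0 := by linear_combination hp'.1 - hp'.2 - hp.1 + hp.2
    exact sub_eq_zero.1 ((mul_eq_zero.1 this).resolve_right (sub_ne_zero.2 hx))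
  exact h (Prod.ext hslope (by linear_combination hp.2 - hp.1 - p.1 * hslope))

lemma sum_card_lines_through (L : Finset (F × F)) :
    ∑ p, #(L.bipartiteAbove OnLine p) = Fintype.card F * #L := by
  simp [sum_card_bipartiteAbove_eq_sum_card_bipartiteBelow, card_points_onLine, mul_comm]

lemma card_points_onLine_inter_le (l l' : F × F) :
    #{p : F × F | OnLine p l ∧ OnLine p l'} ≤ (if l = l' then Fintype.card F else 0) + 1 := by
  split_ifs with h
  · subst h
    simp only [and_self]
    exact (card_points_onLine l).le.trans (Nat.le_succ _)
  · simpa using card_points_onLine_inter_le_one h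

lemma sum_sq_card_lines_through_le (L : Finset (F × F)) :
    ∑ p, #(L.bipartiteAbove OnLine p) ^ 2 ≤ Fintype.card F * #L + #L ^ 2 := by
  let R : F × F → (F × F) × (F × F) → Prop := fun p ll => OnLine p ll.1 ∧ OnLine p ll.2
  have hsq : ∀ p, #(L.bipartiteAbove OnLine p) ^ 2 = #((L ×ˢ L).bipartiteAbove R p) := by
    intro p
    rw [sq, ← card_product]
    simp only [bipartiteAbove, R, filter_product]
  calc ∑ p, #(L.bipartiteAbove OnLine p) ^ 2
      = ∑ ll ∈ L ×ˢ L, #{p : F × F | OnLine p ll.1 ∧ OnLine p ll.2} := by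
        simp_rw [hsq, sum_card_bipartiteAbove_eq_sum_card_bipartiteBelow]; rfl
    _ ≤ ∑ ll ∈ L ×ˢ L, ((if ll.1 = ll.2 then Fintype.card F else 0) + 1) :=
        sum_le_sum fun ll _ => card_points_onLine_inter_le ll.1 ll.2
    _ = Fintype.card F * #L + #L ^ 2 := by
        rw [sum_add_distrib, sum_product]
        simp [sum_ite_eq, sq, mul_comm]

theorem sq_incidences_sub_le (P L : Finset (F × F)) :
    ((incidences P L : ℝ) - #P * #L / Fintype.card F) ^ 2 ≤ Fintype.card F * #P * #L := by
  set q : ℝ := (Fintype.card F : ℝ)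
  have hq : q ≠ 0 := by positivity
  set f : F × F → ℝ := fun p => #(L.bipartiteAbove OnLine p)
  have hsum : ∑ p, f p = q * #L := by
    simp only [f, q]; exact_mod_cast sum_card_lines_through L
  have hsum_sq : ∑ p, f p ^ 2 ≤ q * #L + #L ^ 2 := by
    simp only [f, q]; exact_mod_cast sum_sq_card_lines_through_le L
  have hvar : ∑ p, (f p - #L / q) ^ 2 = ∑ p, f p ^ 2 - #L ^ 2 := by
    simp only [sub_sq, sum_add_distrib, sum_sub_distrib, ← sum_mul, ← mul_sum, hsum, sum_const,
      card_univ, Fintype.card_prod, nsmul_eq_mul]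
    push_cast
    field_simp
    ring
  calc ((incidences P L : ℝ) - #P * #L / q) ^ 2 = (∑ p ∈ P, f p - #P * (#L / q)) ^ 2 := by
        rw [incidences_eq_sum_card_lines_through]; push_cast; ring
    _ ≤ #P * ∑ p, (f p - #L / q) ^ 2 := sq_sum_sub_card_mul_le P f _
    _ ≤ #P * (q * #L) := by gcongr; linarith
    _ = q * #P * #L := by ring

end Incidence

lemma le_or_pow_le_of_sq_sub_le {q n n₀ P M I : ℝ} (hq : 0 < q) (hn : 0 < n) (hn₀ : n ≤ 2 * n₀)
    (hP : P ≤ M ^ 2) (hI : n₀ * n * n ≤ I) (h : (I - P * (n₀ * n) / q) ^ 2 ≤ q * P * (n₀ * n)) :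
    q * n ≤ 2 * M ^ 2 ∨ n ^ 4 ≤ 8 * q * M ^ 2 := by
  have hn₀_pos : 0 < n₀ := by linarith
  by_cases hsmall : I ≤ 2 * (P * (n₀ * n) / q)
  · left
    have h2 : n₀ * n * (q * n) ≤ n₀ * n * (2 * M ^ 2) := by
      have := hI.trans hsmall
      rw [mul_div_assoc', le_div_iff₀ hq] at this
      nlinarith [mul_le_mul_of_nonneg_left hP (by positivity : (0 : ℝ) ≤ n₀ * n)]
    exact le_of_mul_le_mul_left h2 (by positivity)
  · right
    have hhalf : I / 2 ≤ I - P * (n₀ * n) / q := by linarith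
    have hsq : I ^ 2 ≤ 4 * (q * P * (n₀ * n)) := by
      nlinarith [pow_le_pow_left₀ (by nlinarith [mul_pos hn₀_pos hn]) hhalf 2]
    have h2 : n₀ * n * (n₀ * n ^ 3) ≤ n₀ * n * (4 * q * M ^ 2) :=
      calc n₀ * n * (n₀ * n ^ 3) = (n₀ * n * n) ^ 2 := by ring
        _ ≤ I ^ 2 := pow_le_pow_left₀ (by positivity) hI 2
        _ ≤ 4 * (q * P * (n₀ * n)) := hsq
        _ ≤ 4 * (q * M ^ 2 * (n₀ * n)) := by gcongr
        _ = n₀ * n * (4 * q * M ^ 2) := by ring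
    have h3 := le_of_mul_le_mul_left h2 (by positivity)
    nlinarith [mul_le_mul_of_nonneg_right hn₀ (pow_nonneg hn.le 3)]

section SumProduct

variable {F : Type*} [Field F] [DecidableEq F]

lemma card_erase_zero_mul_sq_le_incidences (A : Finset F) :
    #(A.erase 0) * #A * #A ≤ incidences ((A * A) ×ˢ (A + A)) ((A.erase 0)⁻¹ ×ˢ A) := by
  rw [mul_assoc, ← card_product, ← card_product]
  refine card_le_card_of_injOn (fun x => ((x.1 * x.2.2, x.2.1 + x.2.2), (x.1⁻¹, x.2.1)))
    (fun ⟨a, b, c⟩ hx => ?_) fun ⟨a, b, c⟩ hx ⟨a', b', c'⟩ _ h => ?_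
  · simp only [coe_product, Set.mem_prod, mem_coe, mem_erase] at hx
    obtain ⟨⟨ha0, ha⟩, hb, hc⟩ := hx
    simp only [coe_filter, mem_product]
    refine ⟨⟨⟨mul_mem_mul ha hc, add_mem_add hb hc⟩, inv_mem_inv (mem_erase.2 ⟨ha0, ha⟩), hb⟩, ?_⟩
    simp [OnLine, ha0, add_comm]
  · simp only [Prod.mk.injEq, inv_inj] at h
    obtain ⟨⟨-, hbc⟩, rfl, rfl⟩ := h
    simp [add_left_cancel hbc]

variable [Fintype F]

theorem sumset_or_productset_large (A : Finset F) {M : ℝ} (hadd : (#(A + A) : ℝ) ≤ M)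
    (hmul : (#(A * A * A) : ℝ) ≤ M) :
    Fintype.card F * #A ≤ 2 * M ^ 2 ∨ (#A : ℝ) ^ 4 ≤ 8 * Fintype.card F * M ^ 2 := by
  have hq : (1 : ℝ) ≤ Fintype.card F := by exact_mod_cast Fintype.card_pos
  have hAM : (#A : ℝ) ≤ M := le_trans (by exact_mod_cast card_le_card_add_self) hadd
  rcases lt_or_ge #A 2 with hA | hA
  · right
    have hA1 : (#A : ℝ) ≤ 1 := by exact_mod_cast Nat.lt_succ_iff.1 hA
    nlinarith [pow_le_pow_left₀ (Nat.cast_nonneg _) hAM 2,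
      pow_le_one₀ (Nat.cast_nonneg (α := ℝ) #A) hA1 (n := 2)]
  obtain ⟨a, ha⟩ : (A.erase 0).Nonempty := by
    rw [← card_pos]; have := pred_card_le_card_erase (s := A) (a := 0); omega
  have hn₀ : (#A : ℝ) ≤ 2 * #(A.erase 0) := by
    have := pred_card_le_card_erase (s := A) (a := 0); norm_cast; omega
  have hn : (0 : ℝ) < #A := by exact_mod_cast (by omega : 0 < #A)
  have hP : (#((A * A) ×ˢ (A + A)) : ℝ) ≤ M ^ 2 := by
    have hAA : #(A * A) ≤ #(A * A * A) :=
      card_le_card_mul_right₀ (mem_of_mem_erase ha) (ne_of_mem_erase ha)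
    replace hAA : (#(A * A) : ℝ) ≤ M := le_trans (by exact_mod_cast hAA) hmul
    rw [card_product, Nat.cast_mul, sq]
    exact mul_le_mul hAA hadd (Nat.cast_nonneg _) (hAM.trans' (Nat.cast_nonneg _))
  have hL : (#((A.erase 0)⁻¹ ×ˢ A) : ℝ) = #(A.erase 0) * #A := by simp [card_inv]
  have hI : ((#(A.erase 0) * #A * #A : ℕ) : ℝ) ≤
      incidences ((A * A) ×ˢ (A + A)) ((A.erase 0)⁻¹ ×ˢ A) := by
    exact_mod_cast card_erase_zero_mul_sq_le_incidences A
  push_cast at hI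
  have hvinh := sq_incidences_sub_le ((A * A) ×ˢ (A + A)) ((A.erase 0)⁻¹ ×ˢ A)
  rw [hL] at hvinh
  exact le_or_pow_le_of_sq_sub_le (by positivity) hn hn₀ hP hI hvinh

end SumProduct

lemma sq_rpow_div_le_of_mul_le {C q n M : ℝ} (hC : 0 ≤ C) (hq : 1 ≤ q) (hn : 0 ≤ n)
    (hhi : n ≤ C * q ^ (13 / 21 : ℝ)) (h : q * n ≤ 2 * M ^ 2) :
    (n ^ (9 / 5 : ℝ) / q ^ (2 / 5 : ℝ)) ^ 2 ≤ 2 * C ^ (13 / 5 : ℝ) * M ^ 2 := by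
  have hq0 : 0 < q := by linarith
  have hpow : n ^ (13 / 5 : ℝ) ≤ C ^ (13 / 5 : ℝ) * q ^ (9 / 5 : ℝ) :=
    calc n ^ (13 / 5 : ℝ) ≤ (C * q ^ (9 / 13 : ℝ)) ^ (13 / 5 : ℝ) := by
          gcongr
          exact hhi.trans (mul_le_mul_of_nonneg_left
            (Real.rpow_le_rpow_of_exponent_le hq (by norm_num)) hC)
      _ = C ^ (13 / 5 : ℝ) * q ^ (9 / 5 : ℝ) := by
          rw [Real.mul_rpow hC (by positivity), ← Real.rpow_mul hq0.le]; norm_num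
  calc (n ^ (9 / 5 : ℝ) / q ^ (2 / 5 : ℝ)) ^ 2 = n ^ (13 / 5 : ℝ) * n / q ^ (4 / 5 : ℝ) := by
        rw [div_pow, ← Real.rpow_mul_natCast hn, ← Real.rpow_mul_natCast hq0.le,
          ← Real.rpow_add_one' hn (by norm_num)]
        norm_num
    _ ≤ C ^ (13 / 5 : ℝ) * q ^ (9 / 5 : ℝ) * n / q ^ (4 / 5 : ℝ) := by gcongr
    _ = C ^ (13 / 5 : ℝ) * (q * n) := by
        rw [show (9 / 5 : ℝ) = 1 + 4 / 5 by norm_num, Real.rpow_add hq0, Real.rpow_one]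
        field_simp
    _ ≤ 2 * C ^ (13 / 5 : ℝ) * M ^ 2 := by nlinarith [Real.rpow_nonneg hC (13 / 5 : ℝ)]

lemma sq_rpow_div_le_of_pow_le {C q n M : ℝ} (hC : 0 ≤ C) (hq : 0 < q) (hn : 0 < n)
    (hlo : √q ≤ C * n) (h : n ^ 4 ≤ 8 * q * M ^ 2) :
    (n ^ (9 / 5 : ℝ) / q ^ (2 / 5 : ℝ)) ^ 2 ≤ 8 * C ^ (2 / 5 : ℝ) * M ^ 2 := by
  have hpow : q ^ (1 / 5 : ℝ) ≤ C ^ (2 / 5 : ℝ) * n ^ (2 / 5 : ℝ) :=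
    calc q ^ (1 / 5 : ℝ) = √q ^ (2 / 5 : ℝ) := by
          rw [Real.sqrt_eq_rpow, ← Real.rpow_mul hq.le]; norm_num
      _ ≤ (C * n) ^ (2 / 5 : ℝ) := by gcongr
      _ = C ^ (2 / 5 : ℝ) * n ^ (2 / 5 : ℝ) := Real.mul_rpow hC hn.le
  calc (n ^ (9 / 5 : ℝ) / q ^ (2 / 5 : ℝ)) ^ 2
        = n ^ 4 / q * (q ^ (1 / 5 : ℝ) / n ^ (2 / 5 : ℝ)) := by
        have hn4 : n ^ 4 = n ^ (18 / 5 : ℝ) * n ^ (2 / 5 : ℝ) := by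
          rw [← Real.rpow_add hn]; norm_num
        have hq1 : q = q ^ (4 / 5 : ℝ) * q ^ (1 / 5 : ℝ) := by
          rw [← Real.rpow_add hq]; norm_num
        rw [div_pow, ← Real.rpow_mul_natCast hn.le, ← Real.rpow_mul_natCast hq.le, hn4]
        nth_rw 2 [hq1]
        field_simp
        norm_num
        ring
    _ ≤ n ^ 4 / q * C ^ (2 / 5 : ℝ) := by
        gcongr
        rw [div_le_iff₀ (by positivity)]; exact hpow
    _ ≤ 8 * C ^ (2 / 5 : ℝ) * M ^ 2 := by
        rw [div_mul_eq_mul_div, div_le_iff₀ hq]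
        nlinarith [Real.rpow_nonneg hC (2 / 5 : ℝ)]

lemma rpow_div_rpow_le_mul {C q n M : ℝ} (hC : 0 ≤ C) (hq : 1 ≤ q) (hM : 0 ≤ M)
    (hlo : √q ≤ C * n) (hhi : n ≤ C * q ^ (13 / 21 : ℝ))
    (h : q * n ≤ 2 * M ^ 2 ∨ n ^ 4 ≤ 8 * q * M ^ 2) :
    n ^ (9 / 5 : ℝ) / q ^ (2 / 5 : ℝ) ≤ (1 + (2 * C ^ (13 / 5 : ℝ) + 8 * C ^ (2 / 5 : ℝ))) * M := by
  have hq0 : 0 < q := by linarith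
  have hn : 0 < n := pos_of_mul_pos_right ((Real.sqrt_pos.2 hq0).trans_le hlo) hC
  set K := 2 * C ^ (13 / 5 : ℝ) + 8 * C ^ (2 / 5 : ℝ)
  have hK : 0 ≤ K := by positivity
  have hX : (n ^ (9 / 5 : ℝ) / q ^ (2 / 5 : ℝ)) ^ 2 ≤ K * M ^ 2 := by
    rcases h with h | h
    · nlinarith [sq_rpow_div_le_of_mul_le hC hq hn.le hhi h,
        Real.rpow_nonneg hC (2 / 5 : ℝ), sq_nonneg M]
    · nlinarith [sq_rpow_div_le_of_pow_le hC hq0 hn hlo h,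
        Real.rpow_nonneg hC (13 / 5 : ℝ), sq_nonneg M]
  refine (pow_le_pow_iff_left₀ (by positivity) (by positivity) two_ne_zero).1 ?_
  nlinarith [sq_nonneg M]

theorem sum_triple_product_range (C₁ : ℝ) (hC₁ : 0 < C₁) :
    ∃ c : ℝ, 0 < c ∧ ∀ (F : Type) [Field F] [Fintype F] [DecidableEq F] (A : Finset F),
      Real.sqrt (Fintype.card F) ≤ C₁ * A.card →
      (A.card : ℝ) ≤ C₁ * (Fintype.card F : ℝ) ^ ((13 : ℝ) / 21) →
      c * (A.card : ℝ) ^ ((9 : ℝ) / 5) / (Fintype.card F : ℝ) ^ ((2 : ℝ) / 5) ≤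
        max ((A + A).card : ℝ) ((A * A * A).card : ℝ) := by
  refine ⟨(1 + (2 * C₁ ^ (13 / 5 : ℝ) + 8 * C₁ ^ (2 / 5 : ℝ)))⁻¹, by positivity, ?_⟩
  intro F _ _ _ A hlo hhi
  have hq : (1 : ℝ) ≤ Fintype.card F := by exact_mod_cast Fintype.card_pos
  have hM : (0 : ℝ) ≤ max ((A + A).card : ℝ) ((A * A * A).card : ℝ) := by positivity
  rw [mul_div_assoc, inv_mul_le_iff₀ (by positivity)]
  exact rpow_div_rpow_le_mul hC₁.le hq hM hlo hhi
    (sumset_or_productset_large A (le_max_left _ _) (le_max_right _ _))
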